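/- arXiv:2310.01590 — 10 statements merged into one kernel-verified Lean document; each statement's English description precedes it below -/
import Mathlib

section
/- Schröder equivalences in the absence of Boolean complements: for L-fuzzy relations Q : A → B → L, R : B → C → L and S : A → C → L over a frame L, the inclusion Q ; R ≤ S⋆ holds if and only if Qᵀ ; S ≤ R⋆ holds, and Qᵀ ; S ≤ R⋆ holds if and only if S ; Rᵀ ≤ Q⋆ holds. -/
/-- Composition of `L`-fuzzy relations. -/
def fcomp {L : Type*} [Order.Frame L] {A B C : Type*}
    (Q : A → B → L) (R : B → C → L) : A → C → L :=
  fun a c => ⨆ b, Q a b ⊓ R b c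

/-- Converse of an `L`-fuzzy relation. -/
def fconv {L : Type*} {A B : Type*} (Q : A → B → L) : B → A → L :=
  fun b a => Q a b

/-- Pseudo-complement of an `L`-fuzzy relation. -/
def fstar {L : Type*} [Order.Frame L] {A B : Type*} (Q : A → B → L) : A → B → L :=
  fun a b => Q a b ⇨ ⊥

lemma schroeder_aux {L : Type*} [Order.Frame L] {A B C : Type*}
    (Q : A → B → L) (R : B → C → L) (S : A → C → L) :
    fcomp Q R ≤ fstar S ↔ ∀ a b c, Q a b ⊓ R b c ⊓ S a c ≤ ⊥ := by
  constructor
  · intro h a b c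
    have := h a c
    simp only [fcomp, fstar, iSup_le_iff] at this
    exact le_himp_iff.mp (this b)
  · intro h a c
    simp only [fcomp, fstar, iSup_le_iff]
    intro b
    exact le_himp_iff.mpr (h a b c)

/-- Schröder equivalences for `L`-fuzzy relations over a frame. -/
theorem schroeder_equivalences {L : Type*} [Order.Frame L] {A B C : Type*}
    (Q : A → B → L) (R : B → C → L) (S : A → C → L) :
    (fcomp Q R ≤ fstar S ↔ fcomp (fconv Q) S ≤ fstar R) ∧
    (fcomp (fconv Q) S ≤ fstar R ↔ fcomp S (fconv R) ≤ fstar Q) := by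
  rw [schroeder_aux, schroeder_aux, schroeder_aux]
  simp only [fconv]
  constructor
  · constructor
    · intro h b a c
      calc Q a b ⊓ S a c ⊓ R b c = Q a b ⊓ R b c ⊓ S a c := by ac_rfl
        _ ≤ ⊥ := h a b c
    · intro h a b c
      calc Q a b ⊓ R b c ⊓ S a c = Q a b ⊓ S a c ⊓ R b c := by ac_rfl
        _ ≤ ⊥ := h b a c
  · constructor
    · intro h a c b
      calc S a c ⊓ R b c ⊓ Q a b = Q a b ⊓ S a c ⊓ R b c := by ac_rfl
        _ ≤ ⊥ := h b a c
    · intro h b a c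
      calc Q a b ⊓ S a c ⊓ R b c = S a c ⊓ R b c ⊓ Q a b := by ac_rfl
        _ ≤ ⊥ := h a c b
end

section
/- For L-fuzzy relations R : A → C → L and S : B → C → L over a frame L, the right residual of the pseudo-complement of R by S equals the pseudo-complement of a composition: R⋆ / S = (R⋆⋆ ; Sᵀ)⋆. -/
/-- Right residual `S / R` of `S : A → C → L` by `R : B → C → L`. -/
def frres {L : Type*} [Order.Frame L] {A B C : Type*}
    (S : A → C → L) (R : B → C → L) : A → B → L :=
  fun a b => ⨅ c, R b c ⇨ S a c

lemma pt {L : Type*} [Order.Frame L] (r s : L) :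
    s ⇨ rᶜ = (rᶜᶜ ⊓ s)ᶜ := by
  rw [← himp_bot (rᶜᶜ ⊓ s), ← himp_himp, himp_bot, himp_compl_comm rᶜᶜ s, compl_compl_compl]

lemma iSup_compl_eq {L : Type*} [Order.Frame L] {ι : Type*} (f : ι → L) :
    (⨆ i, f i)ᶜ = ⨅ i, (f i)ᶜ := by
  apply eq_of_forall_le_iff; intro x
  simp [← himp_bot, le_himp_iff, le_iInf_iff, inf_iSup_eq, iSup_le_iff]

/-- `R⋆ / S = (R⋆⋆ ; Sᵀ)⋆`. -/
theorem rres_star_eq {L : Type*} [Order.Frame L] {A B C : Type*}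
    (R : A → C → L) (S : B → C → L) :
    frres (fstar R) S = fstar (fcomp (fstar (fstar R)) (fconv S)) := by
  funext a b
  simp only [frres, fstar, fcomp, fconv, himp_bot, iSup_compl_eq]
  exact iInf_congr fun c => pt _ _
end

section
/- If C : A → A → L is a linear strict-order among L-fuzzy relations over a frame L, and E = I ⊔ C is its associated ordering, then C ⊓ I = ⊥, and C is complemented with complement Eᵀ, i.e. C ⊓ Eᵀ = ⊥ and C ⊔ Eᵀ = ⊤. -/
open scoped Classical

/-- Identity `L`-fuzzy relation. -/
noncomputable def fid (L : Type*) [Order.Frame L] (A : Type*) : A → A → L :=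
  fun a a' => if a = a' then ⊤ else ⊥

/-- A linear strict-order is disjoint from the identity and
complemented with complement `Eᵀ`, where `E = I ⊔ C`. -/
theorem strict_order_complemented {L : Type*} [Order.Frame L] {A : Type*}
    (C : A → A → L)
    (htrans : fcomp C C ≤ C)
    (hasym : C ⊓ fconv C = ⊥)
    (hlin : fid L A ⊔ C ⊔ fconv C = ⊤) :
    C ⊓ fid L A = ⊥ ∧
    C ⊓ fconv (fid L A ⊔ C) = ⊥ ∧
    C ⊔ fconv (fid L A ⊔ C) = ⊤ := by
  have hCaa : ∀ a, C a a = ⊥ := by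
    intro a
    have := congrFun (congrFun hasym a) a
    simpa [fconv] using this
  have hirr : C ⊓ fid L A = ⊥ := by
    funext a a'
    by_cases h : a = a'
    · subst h; simp [fid, hCaa a]
    · simp [fid, h]
  refine ⟨hirr, ?_, ?_⟩
  · funext a a'
    have h1 : C a a' ⊓ fid L A a' a = ⊥ := by
      by_cases h : a' = a
      · subst h; simp [fid, hCaa]
      · simp [fid, h]
    have h2 : C a a' ⊓ C a' a = ⊥ := by
      have := congrFun (congrFun hasym a) a'
      simpa [fconv] using this
    simp [fconv, fid, inf_sup_left, h1, h2]
    by_cases h : a' = a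
    · subst h; simp [hCaa]
    · simp [h, h2]
  · funext a a'
    have := congrFun (congrFun hlin a) a'
    simp only [Pi.sup_apply, Pi.top_apply, fconv] at this ⊢
    rw [sup_comm (fid L A a a') (C a a'), sup_assoc] at this
    have hfid : fid L A a' a = fid L A a a' := by simp [fid, eq_comm]
    rw [hfid]
    simpa [sup_comm, sup_assoc, sup_left_comm] using this
end

section
/- If C : A → A → L is a linear strict-order among L-fuzzy relations over a frame L, and E = I ⊔ C is its associated ordering, then the pseudo-complement of C is Eᵀ and the pseudo-complement of E is Cᵀ, i.e. C⋆ = Eᵀ and E⋆ = Cᵀ. -/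
open scoped Classical

/-- For a linear strict-order `C` with associated ordering `E = I ⊔ C`
we have `C⋆ = Eᵀ` and `E⋆ = Cᵀ`. -/
theorem strict_order_pseudo_complements {L : Type*} [Order.Frame L] {A : Type*}
    (C : A → A → L)
    (htrans : fcomp C C ≤ C)
    (hasym : C ⊓ fconv C = ⊥)
    (hlin : fid L A ⊔ C ⊔ fconv C = ⊤) :
    fstar C = fconv (fid L A ⊔ C) ∧
    fstar (fid L A ⊔ C) = fconv C := by
  have hA : ∀ a b, C a b ⊓ C b a = ⊥ := fun a b => congrFun (congrFun hasym a) b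
  have hL : ∀ a b, (fid L A a b ⊔ C a b) ⊔ C b a = ⊤ :=
    fun a b => congrFun (congrFun hlin a) b
  have hCaa : ∀ a, C a a = ⊥ := fun a => by simpa using hA a a
  have hfid : ∀ a b, fid L A a b = fid L A b a := by
    intro a b; simp [fid, eq_comm]
  have hfidC : ∀ a b : A, fid L A a b ⊓ C b a ≤ ⊥ := by
    intro a b
    by_cases h : a = b
    · subst h; simp [hCaa]
    · simp [fid, h]
  constructor
  · funext a b
    show C a b ⇨ ⊥ = fid L A b a ⊔ C b a
    apply le_antisymm
    · calc C a b ⇨ ⊥ = (C a b ⇨ ⊥) ⊓ ((fid L A a b ⊔ C a b) ⊔ C b a) := by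
            rw [hL a b, inf_top_eq]
        _ = ((C a b ⇨ ⊥) ⊓ fid L A a b ⊔ (C a b ⇨ ⊥) ⊓ C a b) ⊔ (C a b ⇨ ⊥) ⊓ C b a := by
            rw [inf_sup_left, inf_sup_left]
        _ ≤ fid L A b a ⊔ C b a := by
            apply sup_le (sup_le ?_ ?_) ?_
            · exact le_sup_of_le_left (le_trans inf_le_right (le_of_eq (hfid a b)))
            · exact le_trans himp_inf_le bot_le
            · exact le_sup_of_le_right inf_le_right
    · rw [le_himp_iff, inf_sup_right]
      apply sup_le
      · exact hfidC b a
      · exact le_of_eq (hA b a)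
  · funext a b
    show (fid L A a b ⊔ C a b) ⇨ ⊥ = C b a
    apply le_antisymm
    · calc (fid L A a b ⊔ C a b) ⇨ ⊥
          = ((fid L A a b ⊔ C a b) ⇨ ⊥) ⊓ ((fid L A a b ⊔ C a b) ⊔ C b a) := by
            rw [hL a b, inf_top_eq]
        _ = ((fid L A a b ⊔ C a b) ⇨ ⊥) ⊓ (fid L A a b ⊔ C a b)
              ⊔ ((fid L A a b ⊔ C a b) ⇨ ⊥) ⊓ C b a := by rw [inf_sup_left]
        _ ≤ C b a := by
            apply sup_le
            · exact le_trans himp_inf_le bot_le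
            · exact inf_le_right
    · rw [le_himp_iff, inf_sup_left]
      apply sup_le
      · rw [inf_comm]; exact hfidC a b
      · exact le_of_eq (hA b a)
end

section
/- If C : A → A → L is a linear strict-order among L-fuzzy relations over a frame L, and E = I ⊔ C is its associated ordering, then C and E are regular, i.e. C⋆⋆ = C and E⋆⋆ = E. -/
open scoped Classical

private lemma himp_bot_of_compl {L : Type*} [Order.Frame L] {x y : L}
    (hinf : x ⊓ y = ⊥) (hsup : x ⊔ y = ⊤) : x ⇨ ⊥ = y := by
  apply le_antisymm
  · calc x ⇨ ⊥ = (x ⇨ ⊥) ⊓ (x ⊔ y) := by rw [hsup, inf_top_eq]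
      _ = (x ⇨ ⊥) ⊓ x ⊔ (x ⇨ ⊥) ⊓ y := inf_sup_left _ _ _
      _ ≤ ⊥ ⊔ y := sup_le_sup (by simp [inf_comm]) inf_le_right
      _ = y := bot_sup_eq y
  · exact le_himp_iff.mpr (by rw [inf_comm, hinf])

private lemma double_star {L : Type*} [Order.Frame L] {x y : L}
    (hinf : x ⊓ y = ⊥) (hsup : x ⊔ y = ⊤) : (x ⇨ ⊥) ⇨ ⊥ = x := by
  rw [himp_bot_of_compl hinf hsup,
    himp_bot_of_compl (by rw [inf_comm]; exact hinf) (by rw [sup_comm]; exact hsup)]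

/-- A linear strict-order `C` and its associated ordering `E = I ⊔ C` are regular. -/
theorem strict_order_regular {L : Type*} [Order.Frame L] {A : Type*}
    (C : A → A → L)
    (htrans : fcomp C C ≤ C)
    (hasym : C ⊓ fconv C = ⊥)
    (hlin : fid L A ⊔ C ⊔ fconv C = ⊤) :
    fstar (fstar C) = C ∧
    fstar (fstar (fid L A ⊔ C)) = fid L A ⊔ C := by
  have hasym' : ∀ a b, C a b ⊓ C b a = ⊥ := fun a b => congrFun (congrFun hasym a) b
  have hlin' : ∀ a b, fid L A a b ⊔ C a b ⊔ C b a = ⊤ := fun a b =>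
    congrFun (congrFun hlin a) b
  constructor
  · funext a b
    show (C a b ⇨ ⊥) ⇨ ⊥ = C a b
    by_cases hab : a = b
    · subst hab
      have : C a a = ⊥ := by
        have := hasym' a a; rwa [inf_idem] at this
      rw [this]; simp
    · have hsup : C a b ⊔ C b a = ⊤ := by
        have := hlin' a b
        simpa [fid, hab] using this
      exact double_star (hasym' a b) hsup
  · funext a b
    show ((fid L A a b ⊔ C a b) ⇨ ⊥) ⇨ ⊥ = fid L A a b ⊔ C a b
    by_cases hab : a = b
    · subst hab; simp [fid]
    · have hsup : C a b ⊔ C b a = ⊤ := by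
        have := hlin' a b
        simpa [fid, hab] using this
      simp only [fid, hab, if_neg, bot_sup_eq]
      simpa [fid, hab] using double_star (hasym' a b) hsup
end

section
/- If C : A → A → L is a linear strict-order among L-fuzzy relations over a frame L, E = I ⊔ C its associated ordering, and X : B → A → L any L-fuzzy relation, then lub(X) ; Cᵀ ≤ (X ; Cᵀ)⋆⋆, i.e., anything strictly below the least upper bound of the image is, up to double pseudo-complementation, strictly below some element of the image. -/
open scoped Classical

/-- Left residual `Q \ R` of `Q : A → B → L` and `R : A → C → L`. -/
def flres {L : Type*} [Order.Frame L] {A B C : Type*}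
    (Q : A → B → L) (R : A → C → L) : B → C → L :=
  fun b c => ⨅ a, Q a b ⇨ R a c

/-- Upper bounds of the image: `ubd(X) = Xᵀ \ E`. -/
def fubd {L : Type*} [Order.Frame L] {A B : Type*}
    (E : A → A → L) (X : B → A → L) : B → A → L :=
  flres (fconv X) E

/-- Lower bounds of the image: `lbd(X) = Xᵀ \ Eᵀ`. -/
def flbd {L : Type*} [Order.Frame L] {A B : Type*}
    (E : A → A → L) (X : B → A → L) : B → A → L :=
  flres (fconv X) (fconv E)

/-- Least upper bound relation: `lub(X) = ubd(X) ⊓ lbd(ubd(X))`. -/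
def flub {L : Type*} [Order.Frame L] {A B : Type*}
    (E : A → A → L) (X : B → A → L) : B → A → L :=
  fubd E X ⊓ flbd E (fubd E X)

/-- For a linear strict-order `C` with associated ordering `E = I ⊔ C`:
`lub(X) ; Cᵀ ≤ (X ; Cᵀ)⋆⋆`. -/
theorem lub_down_closed {L : Type*} [Order.Frame L] {A B : Type*}
    (C : A → A → L)
    (htrans : fcomp C C ≤ C)
    (hasym : C ⊓ fconv C = ⊥)
    (hlin : fid L A ⊔ C ⊔ fconv C = ⊤)
    (X : B → A → L) :
    fcomp (flub (fid L A ⊔ C) X) (fconv C) ≤ fstar (fstar (fcomp X (fconv C))) := by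

  intro b a
  have hgoal : ∀ m, flub (fid L A ⊔ C) X b m ⊓ C a m ⊓
      (fcomp X (fconv C) b a ⇨ ⊥) ≤ ⊥ := by
    intro m
    set p := fcomp X (fconv C) b a ⇨ ⊥ with hp
    have hpS : ∀ n, p ⊓ (X b n ⊓ C a n) ≤ ⊥ := by
      intro n
      have h1 : X b n ⊓ C a n ≤ fcomp X (fconv C) b a := le_iSup (fun k => X b k ⊓ fconv C k a) n
      calc p ⊓ (X b n ⊓ C a n) ≤ p ⊓ fcomp X (fconv C) b a := inf_le_inf_left _ h1
        _ ≤ ⊥ := himp_inf_le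
    have hub : p ≤ fubd (fid L A ⊔ C) X b a := by
      refine le_iInf fun n => ?_
      rw [le_himp_iff]
      have hlin' : fid L A n a ⊔ C n a ⊔ C a n = ⊤ := by
        have := congrFun (congrFun hlin n) a
        simpa [fconv] using this
      have hre : p ⊓ fconv X n b = (p ⊓ X b n) ⊓ ((fid L A n a ⊔ C n a) ⊔ C a n) := by
        rw [hlin', inf_top_eq]; rfl
      rw [hre, inf_sup_left]
      apply sup_le
      · exact inf_le_right.trans le_rfl
      · have : (p ⊓ X b n) ⊓ C a n ≤ ⊥ := by
          rw [inf_assoc]; exact hpS n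
        exact this.trans bot_le
    have hlbd : flub (fid L A ⊔ C) X b m ≤
        fubd (fid L A ⊔ C) X b a ⇨ (fid L A m a ⊔ C m a) := by
      calc flub (fid L A ⊔ C) X b m ≤ flbd (fid L A ⊔ C) (fubd (fid L A ⊔ C) X) b m :=
            inf_le_right
        _ ≤ _ := iInf_le _ a
    have hEm : flub (fid L A ⊔ C) X b m ⊓ p ≤ fid L A m a ⊔ C m a := by
      calc flub (fid L A ⊔ C) X b m ⊓ p
          ≤ (fubd (fid L A ⊔ C) X b a ⇨ (fid L A m a ⊔ C m a)) ⊓ fubd (fid L A ⊔ C) X b a :=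
            inf_le_inf hlbd hub
        _ ≤ _ := himp_inf_le
    have hCaa : ∀ x y, C x y ⊓ C y x = ⊥ := by
      intro x y
      have := congrFun (congrFun hasym x) y
      simpa [fconv] using this
    calc flub (fid L A ⊔ C) X b m ⊓ C a m ⊓ p
        = (flub (fid L A ⊔ C) X b m ⊓ p) ⊓ C a m := by
          rw [inf_assoc, inf_comm (C a m) p, ← inf_assoc]
      _ ≤ (fid L A m a ⊔ C m a) ⊓ C a m := inf_le_inf_right _ hEm
      _ ≤ ⊥ := by
          rw [inf_sup_right]
          apply sup_le
          · by_cases hma : m = a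
            · subst hma
              have := hCaa m m
              simpa [fid] using this.le
            · simp [fid, hma]
          · have := hCaa m a
            exact this.le
  rw [fstar, fstar]
  show _ ≤ (fstar (fcomp X (fconv C)) b a) ⇨ ⊥
  rw [le_himp_iff]
  calc fcomp (flub (fid L A ⊔ C) X) (fconv C) b a ⊓ (fcomp X (fconv C) b a ⇨ ⊥)
      = (⨆ k, flub (fid L A ⊔ C) X b k ⊓ C a k) ⊓ (fcomp X (fconv C) b a ⇨ ⊥) := rfl
    _ ≤ ⊥ := by
        rw [iSup_inf_eq]
        exact iSup_le fun k => hgoal k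
end

section
/- The double pseudo-complement in the previous bound cannot be removed: let L be the three-element chain 0 < u < 1 (a frame), A a one-element type, B a two-element type with elements b₁, b₂, let C : B → B → L be the linear strict-order with C b₁ b₂ = 1 and value 0 on all other pairs, E = I ⊔ C, and let X : A → B → L be given by X a b₁ = 0 and X a b₂ = u. Then the inclusion lub(X) ; Cᵀ ≤ X ; Cᵀ fails (indeed (lub(X) ; Cᵀ) a b₁ = 1 while (X ; Cᵀ) a b₁ = u). -/
open scoped Classical

/-- The three-element chain `0 < 1 < 2` (a frame); `⊥ = 0`, the middle element is `1`,
and `⊤ = 2`. -/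
noncomputable abbrev L3 : Type := Fin 3

/-- The strict-order on the two-element set `Bool` (with `b₁ = false`, `b₂ = true`):
`C b₁ b₂ = ⊤` and `⊥` on all other pairs. -/
noncomputable def Cex : Bool → Bool → L3 :=
  fun b b' => if b = false ∧ b' = true then ⊤ else ⊥

/-- The relation `X` with `X a b₁ = 0` and `X a b₂ = u` (the middle element `1`). -/
noncomputable def Xex : PUnit → Bool → L3 :=
  fun _ b => if b = true then (1 : Fin 3) else ⊥

private lemma himp10 : ((1 : Fin 3) ⇨ (⊥ : Fin 3)) = ⊥ := by
  refine le_antisymm ?_ bot_le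
  rcases le_total (1 : Fin 3) ((1:Fin 3) ⇨ ⊥) with h1 | h1
  · have : (1 : Fin 3) ≤ ⊥ :=
      le_trans (le_of_eq (inf_eq_left.2 h1).symm) inf_himp_le
    exact absurd this (by decide)
  · calc (1:Fin 3) ⇨ ⊥ = (1:Fin 3) ⊓ ((1:Fin 3) ⇨ ⊥) := (inf_eq_right.2 h1).symm
      _ ≤ ⊥ := inf_himp_le

private lemma hcompl : ((1 : Fin 3)ᶜᶜ) = ⊤ := by
  rw [show ((1 : Fin 3)ᶜ) = ⊥ by rw [← himp_bot]; exact himp10, compl_bot]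

private lemma hnotle : ¬ ((⊤ : Fin 3) ≤ (1 : Fin 3)) := by
  intro h
  have : (1 : Fin 3) = ⊤ := top_le_iff.mp h
  rw [show (⊤ : Fin 3) = 2 from rfl] at this
  exact absurd this (by decide)

/-- The double pseudo-complement in the down-closedness lemma cannot be removed:
for the given `C` and `X` the inclusion `lub(X) ; Cᵀ ≤ X ; Cᵀ` fails; indeed
`(lub(X) ; Cᵀ) a b₁ = ⊤` while `(X ; Cᵀ) a b₁ = u`. -/
theorem double_negation_needed :
    ¬ (fcomp (flub (fid L3 Bool ⊔ Cex) Xex) (fconv Cex) ≤ fcomp Xex (fconv Cex)) ∧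
    fcomp (flub (fid L3 Bool ⊔ Cex) Xex) (fconv Cex) PUnit.unit false = ⊤ ∧
    fcomp Xex (fconv Cex) PUnit.unit false = (1 : Fin 3) := by
  have h1 : fcomp (flub (fid L3 Bool ⊔ Cex) Xex) (fconv Cex) PUnit.unit false = ⊤ := by
    simp [fcomp, flub, fubd, flbd, flres, fconv, fid, Xex, Cex,
      iInf_bool_eq, iSup_bool_eq, himp10, hcompl]
  have h2 : fcomp Xex (fconv Cex) PUnit.unit false = (1 : Fin 3) := by
    simp [fcomp, fconv, Xex, Cex, iSup_bool_eq]
  refine ⟨fun h => ?_, h1, h2⟩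
  exact hnotle (le_trans (le_of_eq h1.symm) (le_trans (h PUnit.unit false) (le_of_eq h2)))
end

section
/- The non-empty power of a set is a non-empty relational power in the category of Boolean relations: let A be a type, let P⁺(A) = {S : Set A // S.Nonempty}, and let ε : A → P⁺(A) → Prop be the membership relation ε a S ↔ a ∈ S.val. Then syq(ε, ε) = I, and for every relation Q : A → B → Prop one has dom(syq(Q, ε)) = dom(Qᵀ). -/
/-- Composition of Boolean relations. -/
def rcomp {A B C : Type*} (Q : A → B → Prop) (R : B → C → Prop) : A → C → Prop :=
  fun a c => ∃ b, Q a b ∧ R b c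

/-- Converse of a Boolean relation. -/
def rconv {A B : Type*} (Q : A → B → Prop) : B → A → Prop :=
  fun b a => Q a b

/-- Identity Boolean relation. -/
def rid (A : Type*) : A → A → Prop :=
  fun a a' => a = a'

/-- Left residual `Q \ R`. -/
def rlres {A B C : Type*} (Q : A → B → Prop) (R : A → C → Prop) : B → C → Prop :=
  fun b c => ∀ a, Q a b → R a c

/-- Right residual `S / R`. -/
def rrres {A B C : Type*} (S : A → C → Prop) (R : B → C → Prop) : A → B → Prop :=
  fun a b => ∀ c, R b c → S a c

/-- Symmetric quotient `syq(Q, R) = (Q \ R) ⊓ (Qᵀ / Rᵀ)`. -/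
def rsyq {A B C : Type*} (Q : A → B → Prop) (R : A → C → Prop) : B → C → Prop :=
  rlres Q R ⊓ rrres (rconv Q) (rconv R)

/-- Domain of a Boolean relation: `dom(R) = I ⊓ (R ; Rᵀ)`. -/
def rdom {A B : Type*} (R : A → B → Prop) : A → A → Prop :=
  rid A ⊓ rcomp R (rconv R)

/-- The non-empty power set. -/
def NEPow (A : Type*) := {S : Set A // S.Nonempty}

/-- The membership relation into the non-empty power set. -/
def mem' {A : Type*} : A → NEPow A → Prop :=
  fun a S => a ∈ S.val

/-- The non-empty power of a set is a non-empty relational power in the category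
of Boolean relations: `syq(ε, ε) = I` and `dom(syq(Q, ε)) = dom(Qᵀ)` for every `Q`. -/
theorem nonempty_power_is_nonempty_relational_power (A : Type*) :
    rsyq (mem' (A := A)) (mem' (A := A)) = rid (NEPow A) ∧
    ∀ (B : Type*) (Q : A → B → Prop),
      rdom (rsyq Q (mem' (A := A))) = rdom (rconv Q) := by
  constructor
  · funext S T
    simp only [rsyq, rlres, rrres, rconv, rid, mem', Pi.inf_apply, inf_Prop_eq, eq_iff_iff]
    constructor
    · rintro ⟨h1, h2⟩
      exact Subtype.ext (Set.ext fun a => ⟨h1 a, h2 a⟩)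
    · rintro rfl; exact ⟨fun a h => h, fun a h => h⟩
  · intro B Q
    funext b b'
    simp only [rdom, rcomp, rconv, rsyq, rlres, rrres, rid, mem', Pi.inf_apply, inf_Prop_eq,
      eq_iff_iff]
    constructor
    · rintro ⟨rfl, S, ⟨h1, h2⟩, -⟩
      obtain ⟨a, ha⟩ := S.2
      exact ⟨rfl, a, h2 a ha, h2 a ha⟩
    · rintro ⟨rfl, a, ha, -⟩
      refine ⟨rfl, ⟨{x | Q x b}, ⟨a, ha⟩⟩, ⟨fun x h => h, fun x h => h⟩,
        ⟨fun x h => h, fun x h => h⟩⟩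
end

section
/- For Boolean relations, the non-empty power recovers every relation: let B be a type, P⁺(B) = {S : Set B // S.Nonempty}, and ε : B → P⁺(B) → Prop the membership relation ε b S ↔ b ∈ S.val. Then for every relation R : A → B → Prop one has syq(Rᵀ, ε) ; εᵀ = R. -/
/-- The non-empty power recovers every relation: `syq(Rᵀ, ε) ; εᵀ = R`. -/
theorem nonempty_power_recovers {A B : Type*} (R : A → B → Prop) :
    rcomp (rsyq (rconv R) (mem' (A := B))) (rconv (mem' (A := B))) = R := by
  funext a b
  apply propext
  constructor
  · rintro ⟨S, ⟨h1, h2⟩, hb⟩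
    exact h2 b hb
  · intro h
    refine ⟨⟨{b' | R a b'}, ⟨b, h⟩⟩, ⟨?_, ?_⟩, h⟩
    · intro b' hb'; exact hb'
    · intro b' hb'; exact hb'
end

section
/- Equational Least-Upper-Bound Property in the concrete model of the real number object: for the ordering E = (≤) on ℝ and every relation X : A → ℝ → Prop (in the Boolean setting every relation is regular, so the regularity hypothesis of the paper is automatic), one has dom(lub(X)) = dom(X) ⊓ dom(ubd(X)). -/
/-- Upper bounds of the image: `ubd(X) = Xᵀ \ E`. -/
def rubd {A B : Type*} (E : A → A → Prop) (X : B → A → Prop) : B → A → Prop :=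
  rlres (rconv X) E

/-- Lower bounds of the image: `lbd(X) = Xᵀ \ Eᵀ`. -/
def rlbd {A B : Type*} (E : A → A → Prop) (X : B → A → Prop) : B → A → Prop :=
  rlres (rconv X) (rconv E)

/-- Least upper bound relation: `lub(X) = ubd(X) ⊓ lbd(ubd(X))`. -/
def rlub {A B : Type*} (E : A → A → Prop) (X : B → A → Prop) : B → A → Prop :=
  rubd E X ⊓ rlbd E (rubd E X)


/-- Equational Least-Upper-Bound Property in the concrete model of the real
number object: for `E = (≤)` on `ℝ` and every relation `X : A → ℝ → Prop`,
`dom(lub(X)) = dom(X) ⊓ dom(ubd(X))`. -/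
theorem lub_property_reals_eq {A : Type*} (X : A → ℝ → Prop) :
    rdom (rlub (fun x y : ℝ => x ≤ y) X) =
      rdom X ⊓ rdom (rubd (fun x y : ℝ => x ≤ y) X) := by
  ext a a'
  simp only [rdom, rlub, rubd, rlbd, rlres, rconv, rid, rcomp, Pi.inf_apply, inf_Prop_eq,
    and_self]
  constructor
  · rintro ⟨rfl, b, ⟨hub, hlb⟩, -⟩
    refine ⟨⟨rfl, ?_⟩, rfl, b, hub, hub⟩
    by_contra h
    have := hlb (b - 1) (fun x hx => absurd (⟨x, hx, hx⟩ : ∃ y, X a y ∧ X a y) h)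
    linarith
  · rintro ⟨⟨rfl, x, hx, -⟩, -, c, hc, -⟩
    refine ⟨rfl, ?_⟩
    have hne : Set.Nonempty {y | X a y} := ⟨x, hx⟩
    have hbdd : BddAbove {y | X a y} := ⟨c, fun y hy => hc y hy⟩
    exact ⟨sSup {y | X a y}, ⟨fun y hy => le_csSup hbdd hy,
      fun d hd => csSup_le hne hd⟩, fun y hy => le_csSup hbdd hy,
      fun d hd => csSup_le hne hd⟩
end
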